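/- arXiv:1012.5397 — 2 statements merged into one kernel-verified Lean document; each statement's English description precedes it below -/
import Mathlib

section
/- Let f : [a,b] → ℝ be differentiable with γ ≤ f'(t) ≤ Γ for all t ∈ [a,b], and set S = (f(b)-f(a))/(b-a). Then for every x ∈ [a,b], |f(x) - (x - (a+b)/2)·S - (1/(b-a)) ∫_a^b f(t) dt| ≤ ((b-a)/2)(Γ - S). -/
/-!
Writing `f = Γ t - g`, the bound `f' ≤ Γ` says exactly that `g` is nondecreasing, and the
Ostrowski deviation of `f` is minus that of `g`, while `(b - a) / 2 * (Γ - S)` is `(g b - g a) / 2`.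
For a nondecreasing `g`, comparing `∫ g` over `[a, x]` and `[x, b]` with the rectangles of
heights `g a`, `g x`, `g b` bounds the deviation by `(g b - g a) / 2`.
-/

open intervalIntegral Set MeasureTheory

noncomputable def ostrowskiDeviation (f : ℝ → ℝ) (a b x : ℝ) : ℝ :=
  f x - (x - (a + b) / 2) * ((f b - f a) / (b - a)) - (1 / (b - a)) * ∫ t in a..b, f t

theorem monotoneOn_const_mul_sub_of_deriv_le {D : Set ℝ} (hD : Convex ℝ D) {f f' : ℝ → ℝ}
    {Γ : ℝ} (hf : ∀ t ∈ D, HasDerivAt f (f' t) t) (hΓ : ∀ t ∈ D, f' t ≤ Γ) :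
    MonotoneOn (fun t => Γ * t - f t) D := by
  have hg' (t : ℝ) (ht : t ∈ D) : HasDerivAt (fun t => Γ * t - f t) (Γ - f' t) t :=
    (((hasDerivAt_id' t).const_mul Γ).sub (hf t ht)).congr_deriv (by ring)
  exact monotoneOn_of_hasDerivWithinAt_nonneg hD
    (fun t ht => (hg' t ht).continuousAt.continuousWithinAt)
    (fun t ht => (hg' t (interior_subset ht)).hasDerivWithinAt)
    (fun t ht => sub_nonneg.2 (hΓ t (interior_subset ht)))

theorem MonotoneOn.mul_le_intervalIntegral {g : ℝ → ℝ} {a b : ℝ} (hg : MonotoneOn g (Icc a b))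
    (hab : a ≤ b) : (b - a) * g a ≤ ∫ t in a..b, g t := by
  have hint : IntervalIntegrable g volume a b :=
    MonotoneOn.intervalIntegrable (by rwa [uIcc_of_le hab])
  simpa using integral_mono_on hab intervalIntegrable_const hint
    fun t ht => hg (left_mem_Icc.2 hab) ht ht.1

theorem MonotoneOn.intervalIntegral_le_mul {g : ℝ → ℝ} {a b : ℝ} (hg : MonotoneOn g (Icc a b))
    (hab : a ≤ b) : ∫ t in a..b, g t ≤ (b - a) * g b := by
  have hint : IntervalIntegrable g volume a b :=
    MonotoneOn.intervalIntegrable (by rwa [uIcc_of_le hab])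
  simpa using integral_mono_on hab hint intervalIntegrable_const
    fun t ht => hg ht (right_mem_Icc.2 hab) ht.2

theorem MonotoneOn.abs_ostrowskiDeviation_le {g : ℝ → ℝ} {a b x : ℝ}
    (hg : MonotoneOn g (Icc a b)) (hab : a < b) (hx : x ∈ Icc a b) :
    |ostrowskiDeviation g a b x| ≤ (g b - g a) / 2 := by
  obtain ⟨hax, hxb⟩ := hx
  have hleft : MonotoneOn g (Icc a x) := hg.mono (Icc_subset_Icc_right hxb)
  have hright : MonotoneOn g (Icc x b) := hg.mono (Icc_subset_Icc_left hax)
  have hsplit : ∫ t in a..b, g t = (∫ t in a..x, g t) + ∫ t in x..b, g t :=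
    (integral_add_adjacent_intervals
      (MonotoneOn.intervalIntegrable (by rwa [uIcc_of_le hax]))
      (MonotoneOn.intervalIntegrable (by rwa [uIcc_of_le hxb]))).symm
  have hgax : g a ≤ g x := hg (left_mem_Icc.2 hab.le) ⟨hax, hxb⟩ hax
  have hgxb : g x ≤ g b := hg ⟨hax, hxb⟩ (right_mem_Icc.2 hab.le) hxb
  have h₁ := hleft.mul_le_intervalIntegral hax
  have h₂ := hleft.intervalIntegral_le_mul hax
  have h₃ := hright.mul_le_intervalIntegral hxb
  have h₄ := hright.intervalIntegral_le_mul hxb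
  have hba : 0 < b - a := sub_pos.2 hab
  have hdev : ostrowskiDeviation g a b x = ((b - a) * g x - (x - (a + b) / 2) * (g b - g a)
      - ((∫ t in a..x, g t) + ∫ t in x..b, g t)) / (b - a) := by
    rw [ostrowskiDeviation, hsplit]
    field_simp
  rw [hdev, abs_div, abs_of_pos hba, div_le_iff₀ hba, abs_le]
  constructor
  · nlinarith [mul_le_mul_of_nonneg_left hgax (sub_nonneg.2 hxb)]
  · nlinarith [mul_le_mul_of_nonneg_left hgxb (sub_nonneg.2 hax)]

theorem ostrowskiDeviation_const_mul_sub {f : ℝ → ℝ} {a b : ℝ} (hab : a ≠ b)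
    (hf : IntervalIntegrable f volume a b) (c x : ℝ) :
    ostrowskiDeviation (fun t => c * t - f t) a b x = -ostrowskiDeviation f a b x := by
  have hsub : b - a ≠ 0 := sub_ne_zero.2 hab.symm
  simp only [ostrowskiDeviation]
  rw [integral_sub (intervalIntegrable_id.const_mul c) hf, intervalIntegral.integral_const_mul, integral_id]
  field_simp
  ring

theorem ujevic_upper_general (a b Γ : ℝ) (hab : a < b) (f f' : ℝ → ℝ)
    (hderiv : ∀ t ∈ Icc a b, HasDerivAt f (f' t) t)
    (hΓ : ∀ t ∈ Icc a b, f' t ≤ Γ) :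
    ∀ x ∈ Icc a b,
      |f x - (x - (a + b) / 2) * ((f b - f a) / (b - a)) -
          (1 / (b - a)) * ∫ t in a..b, f t| ≤
        ((b - a) / 2) * (Γ - (f b - f a) / (b - a)) := by
  intro x hx
  have hg := monotoneOn_const_mul_sub_of_deriv_le (convex_Icc a b) hderiv hΓ
  have hf : IntervalIntegrable f volume a b := by
    refine ContinuousOn.intervalIntegrable fun t ht => ?_
    exact (hderiv t (by rwa [uIcc_of_le hab.le] at ht)).continuousAt.continuousWithinAt
  have hbound := hg.abs_ostrowskiDeviation_le hab hx
  rw [ostrowskiDeviation_const_mul_sub hab.ne hf, abs_neg] at hbound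
  calc _ = |ostrowskiDeviation f a b x| := rfl
    _ ≤ _ := hbound
    _ = _ := by
      field_simp [sub_ne_zero.2 hab.ne']
      ring

theorem ujevic_upper (a b γ Γ : ℝ) (hab : a < b) (f f' : ℝ → ℝ)
    (hderiv : ∀ t ∈ Icc a b, HasDerivAt f (f' t) t)
    (hγ : ∀ t ∈ Icc a b, γ ≤ f' t) (hΓ : ∀ t ∈ Icc a b, f' t ≤ Γ) :
    ∀ x ∈ Icc a b,
      |f x - (x - (a + b) / 2) * ((f b - f a) / (b - a)) -
          (1 / (b - a)) * ∫ t in a..b, f t| ≤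
        ((b - a) / 2) * (Γ - (f b - f a) / (b - a)) :=
  ujevic_upper_general a b Γ hab f f' hderiv hΓ
end

section
/- Fix a < b and x ∈ [a,b], and define K(x,t) = (t/2)(t-2a) for t ∈ [a,x] and K(x,t) = (t/2)(t-2b) for t ∈ (x,b]. If f is twice differentiable on [a,b], then (1/(b-a)) ∫_a^b K(x,t) f''(t) dt = x f'(x) - f(x) + (a² f'(a) - b² f'(b))/(2(b-a)) + (1/(b-a)) ∫_a^b f(t) dt. -/
/-!
Split the integral at `x`. On `[a, x]` the kernel is `g t = t (t - 2a) / 2`, on `[x, b]` it is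
`t (t - 2b) / 2`; each satisfies `g' t = t - c` and `g'' = 1`, and `g' c = 0` at the outer endpoint
`c`. Integrating by parts twice on each piece therefore leaves only the boundary terms at `x`, which
combine to `(b - a) (x f'(x) - f(x))`, the terms `a² f'(a) / 2` and `- b² f'(b) / 2`, and `∫ f`.
-/

open intervalIntegral Set MeasureTheory

section IntegrationByPartsTwice

variable {u v : ℝ} {f f' f'' g g' g'' : ℝ → ℝ}

theorem integral_mul_deriv_deriv_eq
    (hf : ∀ t ∈ uIcc u v, HasDerivAt f (f' t) t) (hf' : ∀ t ∈ uIcc u v, HasDerivAt f' (f'' t) t)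
    (hg : ∀ t ∈ uIcc u v, HasDerivAt g (g' t) t) (hg' : ∀ t ∈ uIcc u v, HasDerivAt g' (g'' t) t)
    (hf'' : IntervalIntegrable f'' volume u v) (hg'' : IntervalIntegrable g'' volume u v) :
    ∫ t in u..v, g t * f'' t =
      g v * f' v - g u * f' u - (g' v * f v - g' u * f u) + ∫ t in u..v, g'' t * f t := by
  have hf'_int : IntervalIntegrable f' volume u v :=
    ContinuousOn.intervalIntegrable fun t ht => (hf' t ht).continuousAt.continuousWithinAt
  have hg'_int : IntervalIntegrable g' volume u v :=
    ContinuousOn.intervalIntegrable fun t ht => (hg' t ht).continuousAt.continuousWithinAt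
  rw [integral_mul_deriv_eq_deriv_mul hg hf' hg'_int hf'',
    integral_mul_deriv_eq_deriv_mul hg' hf hg'' hf'_int]
  ring

theorem integral_quadratic_mul_deriv_deriv_eq (c : ℝ)
    (hf : ∀ t ∈ uIcc u v, HasDerivAt f (f' t) t) (hf' : ∀ t ∈ uIcc u v, HasDerivAt f' (f'' t) t)
    (hf'' : IntervalIntegrable f'' volume u v) :
    ∫ t in u..v, t / 2 * (t - 2 * c) * f'' t =
      v / 2 * (v - 2 * c) * f' v - u / 2 * (u - 2 * c) * f' u - ((v - c) * f v - (u - c) * f u) +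
        ∫ t in u..v, f t := by
  have hg : ∀ t, HasDerivAt (fun t => t / 2 * (t - 2 * c)) (t - c) t := fun t =>
    (((hasDerivAt_id' t).div_const 2).fun_mul ((hasDerivAt_id' t).sub_const (2 * c))).congr_deriv
      (by ring)
  have hg' : ∀ t, HasDerivAt (fun t => t - c) 1 t := fun t => (hasDerivAt_id t).sub_const c
  simpa only [one_mul] using integral_mul_deriv_deriv_eq hf hf' (fun t _ => hg t)
    (fun t _ => hg' t) hf'' intervalIntegrable_const

end IntegrationByPartsTwice

theorem integral_ite_le_eq_add {a b x : ℝ} (hax : a ≤ x) (hxb : x ≤ b) {p q : ℝ → ℝ}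
    (hp : IntervalIntegrable p volume a x) (hq : IntervalIntegrable q volume x b) :
    ∫ t in a..b, (if t ≤ x then p t else q t) = (∫ t in a..x, p t) + ∫ t in x..b, q t := by
  have hp_eq : EqOn (fun t => if t ≤ x then p t else q t) p (uIoc a x) := fun t ht => by
    rw [uIoc_of_le hax] at ht
    exact if_pos ht.2
  have hq_eq : EqOn (fun t => if t ≤ x then p t else q t) q (uIoc x b) := fun t ht => by
    rw [uIoc_of_le hxb] at ht
    exact if_neg (not_le.2 ht.1)
  rw [← integral_add_adjacent_intervals (hp.congr hp_eq.symm) (hq.congr hq_eq.symm),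
    integral_congr_ae (Filter.Eventually.of_forall hp_eq),
    integral_congr_ae (Filter.Eventually.of_forall hq_eq)]

theorem kernel_identity (a b x : ℝ) (hab : a < b) (hx : x ∈ Icc a b)
    (f f' f'' : ℝ → ℝ)
    (hderiv : ∀ t ∈ Icc a b, HasDerivAt f (f' t) t)
    (hderiv' : ∀ t ∈ Icc a b, HasDerivAt f' (f'' t) t)
    (hint : IntervalIntegrable f'' MeasureTheory.volume a b) :
    (1 / (b - a)) *
        ∫ t in a..b,
          (if t ≤ x then t / 2 * (t - 2 * a) else t / 2 * (t - 2 * b)) * f'' t =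
      x * f' x - f x + (a ^ 2 * f' a - b ^ 2 * f' b) / (2 * (b - a)) +
        (1 / (b - a)) * ∫ t in a..b, f t := by
  obtain ⟨hax, hxb⟩ := hx
  rw [← uIcc_of_le hab.le] at hderiv hderiv'
  have hleft : uIcc a x ⊆ uIcc a b := uIcc_subset_uIcc left_mem_uIcc (mem_uIcc_of_le hax hxb)
  have hright : uIcc x b ⊆ uIcc a b := uIcc_subset_uIcc (mem_uIcc_of_le hax hxb) right_mem_uIcc
  have hf_int : IntervalIntegrable f volume a b :=
    ContinuousOn.intervalIntegrable fun t ht => (hderiv t ht).continuousAt.continuousWithinAt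
  have hint_left := hint.mono_set hleft
  have hint_right := hint.mono_set hright
  simp only [ite_mul]
  rw [integral_ite_le_eq_add hax hxb (hint_left.continuousOn_mul (by fun_prop))
      (hint_right.continuousOn_mul (by fun_prop)),
    integral_quadratic_mul_deriv_deriv_eq a (fun t ht => hderiv t (hleft ht))
      (fun t ht => hderiv' t (hleft ht)) hint_left,
    integral_quadratic_mul_deriv_deriv_eq b (fun t ht => hderiv t (hright ht))
      (fun t ht => hderiv' t (hright ht)) hint_right,
    ← integral_add_adjacent_intervals (hf_int.mono_set hleft) (hf_int.mono_set hright)]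
  field_simp [sub_ne_zero.2 hab.ne']
  ring
end
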